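/- Let $\zeta_0, \zeta_1, \zeta_2, \zeta_3$ be pairwise distinct complex numbers and $x = \frac{(\zeta_0-\zeta_1)(\zeta_2-\zeta_3)}{(\zeta_0-\zeta_3)(\zeta_2-\zeta_1)}$. Then the following three quantities are equal: $\frac{d\ln x}{(\zeta_0-\zeta_2)(\zeta_3-\zeta_1)}$, $\frac{d\ln(1 - 1/x)}{(\zeta_0-\zeta_3)(\zeta_1-\zeta_2)}$, and $\frac{d\ln\frac{1}{1-x}}{(\zeta_0-\zeta_1)(\zeta_2-\zeta_3)}$, where each differential is taken with respect to the variables $z_i$ and evaluated at $z_i = \zeta_i$. Concretely, as linear functionals of $(dz_0, dz_1, dz_2, dz_3)$: $\frac{1}{(\zeta_0-\zeta_2)(\zeta_3-\zeta_1)}\, d\ln x = \frac{1}{(\zeta_0-\zeta_3)(\zeta_1-\zeta_2)}\, d\ln(1 - 1/x) = \frac{1}{(\zeta_0-\zeta_1)(\zeta_2-\zeta_3)}\, d\ln\frac{1}{1-x}$, with the common value $-\sum_{i=0}^{3} \frac{dz_i}{\prod_{j \neq i}(\zeta_i - \zeta_j)}$. -/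
import Mathlib

set_option maxHeartbeats 4000000

/-- The three normalizations of the differentials of `ln x`, `ln (1 - 1/x)`,
`ln (1/(1-x))`, written out as explicit linear functionals of
`(dz₀, dz₁, dz₂, dz₃)` (logarithmic differentials of the corresponding
cross-ratios evaluated at `z = ζ`), all agree and equal
`-∑ᵢ dzᵢ / ∏_{j ≠ i} (ζᵢ - ζⱼ)`. -/
theorem crossRatio_symmetrized_differential
    (ζ0 ζ1 ζ2 ζ3 : ℂ)
    (h01 : ζ0 ≠ ζ1) (h02 : ζ0 ≠ ζ2) (h03 : ζ0 ≠ ζ3)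
    (h12 : ζ1 ≠ ζ2) (h13 : ζ1 ≠ ζ3) (h23 : ζ2 ≠ ζ3)
    (dz0 dz1 dz2 dz3 : ℂ) :
    let Dlnx := (dz0 - dz1) / (ζ0 - ζ1) + (dz2 - dz3) / (ζ2 - ζ3)
      - (dz0 - dz3) / (ζ0 - ζ3) - (dz2 - dz1) / (ζ2 - ζ1)
    let Dlnx' := (dz0 - dz2) / (ζ0 - ζ2) + (dz3 - dz1) / (ζ3 - ζ1)
      - (dz0 - dz1) / (ζ0 - ζ1) - (dz3 - dz2) / (ζ3 - ζ2)
    let Dlnx'' := (dz0 - dz3) / (ζ0 - ζ3) + (dz1 - dz2) / (ζ1 - ζ2)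
      - (dz0 - dz2) / (ζ0 - ζ2) - (dz1 - dz3) / (ζ1 - ζ3)
    let common := -(dz0 / ((ζ0 - ζ1) * (ζ0 - ζ2) * (ζ0 - ζ3))
      + dz1 / ((ζ1 - ζ0) * (ζ1 - ζ2) * (ζ1 - ζ3))
      + dz2 / ((ζ2 - ζ0) * (ζ2 - ζ1) * (ζ2 - ζ3))
      + dz3 / ((ζ3 - ζ0) * (ζ3 - ζ1) * (ζ3 - ζ2)))
    Dlnx / ((ζ0 - ζ2) * (ζ3 - ζ1)) = common ∧
    Dlnx' / ((ζ0 - ζ3) * (ζ1 - ζ2)) = common ∧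
    Dlnx'' / ((ζ0 - ζ1) * (ζ2 - ζ3)) = common := by
  have h01' : ζ0 - ζ1 ≠ 0 := sub_ne_zero.mpr h01
  have h02' : ζ0 - ζ2 ≠ 0 := sub_ne_zero.mpr h02
  have h03' : ζ0 - ζ3 ≠ 0 := sub_ne_zero.mpr h03
  have h12' : ζ1 - ζ2 ≠ 0 := sub_ne_zero.mpr h12
  have h13' : ζ1 - ζ3 ≠ 0 := sub_ne_zero.mpr h13
  have h23' : ζ2 - ζ3 ≠ 0 := sub_ne_zero.mpr h23
  have h10' : ζ1 - ζ0 ≠ 0 := sub_ne_zero.mpr h01.symm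
  have h20' : ζ2 - ζ0 ≠ 0 := sub_ne_zero.mpr h02.symm
  have h30' : ζ3 - ζ0 ≠ 0 := sub_ne_zero.mpr h03.symm
  have h21' : ζ2 - ζ1 ≠ 0 := sub_ne_zero.mpr h12.symm
  have h31' : ζ3 - ζ1 ≠ 0 := sub_ne_zero.mpr h13.symm
  have h32' : ζ3 - ζ2 ≠ 0 := sub_ne_zero.mpr h23.symm
  have k10 : ((1/(ζ0-ζ1) - 1/(ζ0-ζ3) : ℂ))/((ζ0-ζ2)*(ζ3-ζ1)) = -(1/((ζ0-ζ1)*(ζ0-ζ2)*(ζ0-ζ3))) := by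
    field_simp
    ring
  have k11 : ((1/(ζ2-ζ1) - 1/(ζ0-ζ1) : ℂ))/((ζ0-ζ2)*(ζ3-ζ1)) = -(1/((ζ1-ζ0)*(ζ1-ζ2)*(ζ1-ζ3))) := by
    field_simp
    ring
  have k12 : ((1/(ζ2-ζ3) - 1/(ζ2-ζ1) : ℂ))/((ζ0-ζ2)*(ζ3-ζ1)) = -(1/((ζ2-ζ0)*(ζ2-ζ1)*(ζ2-ζ3))) := by
    field_simp
    ring
  have k13 : ((1/(ζ0-ζ3) - 1/(ζ2-ζ3) : ℂ))/((ζ0-ζ2)*(ζ3-ζ1)) = -(1/((ζ3-ζ0)*(ζ3-ζ1)*(ζ3-ζ2))) := by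
    field_simp
    ring
  have k20 : ((1/(ζ0-ζ2) - 1/(ζ0-ζ1) : ℂ))/((ζ0-ζ3)*(ζ1-ζ2)) = -(1/((ζ0-ζ1)*(ζ0-ζ2)*(ζ0-ζ3))) := by
    field_simp
    ring
  have k21 : ((1/(ζ0-ζ1) - 1/(ζ3-ζ1) : ℂ))/((ζ0-ζ3)*(ζ1-ζ2)) = -(1/((ζ1-ζ0)*(ζ1-ζ2)*(ζ1-ζ3))) := by
    field_simp
    ring
  have k22 : ((1/(ζ3-ζ2) - 1/(ζ0-ζ2) : ℂ))/((ζ0-ζ3)*(ζ1-ζ2)) = -(1/((ζ2-ζ0)*(ζ2-ζ1)*(ζ2-ζ3))) := by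
    field_simp
    ring
  have k23 : ((1/(ζ3-ζ1) - 1/(ζ3-ζ2) : ℂ))/((ζ0-ζ3)*(ζ1-ζ2)) = -(1/((ζ3-ζ0)*(ζ3-ζ1)*(ζ3-ζ2))) := by
    field_simp
    ring
  have k30 : ((1/(ζ0-ζ3) - 1/(ζ0-ζ2) : ℂ))/((ζ0-ζ1)*(ζ2-ζ3)) = -(1/((ζ0-ζ1)*(ζ0-ζ2)*(ζ0-ζ3))) := by
    field_simp
    ring
  have k31 : ((1/(ζ1-ζ2) - 1/(ζ1-ζ3) : ℂ))/((ζ0-ζ1)*(ζ2-ζ3)) = -(1/((ζ1-ζ0)*(ζ1-ζ2)*(ζ1-ζ3))) := by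
    field_simp
    ring
  have k32 : ((1/(ζ0-ζ2) - 1/(ζ1-ζ2) : ℂ))/((ζ0-ζ1)*(ζ2-ζ3)) = -(1/((ζ2-ζ0)*(ζ2-ζ1)*(ζ2-ζ3))) := by
    field_simp
    ring
  have k33 : ((1/(ζ1-ζ3) - 1/(ζ0-ζ3) : ℂ))/((ζ0-ζ1)*(ζ2-ζ3)) = -(1/((ζ3-ζ0)*(ζ3-ζ1)*(ζ3-ζ2))) := by
    field_simp
    ring
  intro Dlnx Dlnx2 Dlnx3 common
  simp only [Dlnx, Dlnx2, Dlnx3, common]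
  clear_value Dlnx Dlnx2 Dlnx3 common
  clear Dlnx Dlnx2 Dlnx3 common
  refine ⟨?_, ?_, ?_⟩
  · linear_combination dz0 * k10 + dz1 * k11 + dz2 * k12 + dz3 * k13
  · linear_combination dz0 * k20 + dz1 * k21 + dz2 * k22 + dz3 * k23
  · linear_combination dz0 * k30 + dz1 * k31 + dz2 * k32 + dz3 * k33
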